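/- arXiv:2107.01904 — 2 statements merged into one kernel-verified Lean document; each statement's English description precedes it below -/
import Mathlib

section
/- Bias–variance–covariance decomposition of the generalization error of an ensemble trained on a single dataset with multiple random seeds: GE(f_ens) = E[ (Bias̄(X₀))² + (1/M)·Var̄(X₀) + (1 − 1/M)·Cov̄(X₀) ] + σ². -/
open MeasureTheory ProbabilityTheory Finset

/-- The pointwise mean `f̄(x) = E[f(x; R, Z)]` of a randomized estimator. -/
noncomputable def fbar {Ω 𝒳 ℛ 𝒵 : Type*} [MeasurableSpace Ω] (μ : Measure Ω)
    (R : Ω → ℛ) (Z : Ω → 𝒵) (f : 𝒳 → ℛ → 𝒵 → ℝ) (x : 𝒳) : ℝ :=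
  ∫ ω, f x (R ω) (Z ω) ∂μ

/-- The pointwise variance `Var(f|x) = E[(f(x; R, Z) − f̄(x))²]` of a randomized estimator. -/
noncomputable def varf {Ω 𝒳 ℛ 𝒵 : Type*} [MeasurableSpace Ω] (μ : Measure Ω)
    (R : Ω → ℛ) (Z : Ω → 𝒵) (f : 𝒳 → ℛ → 𝒵 → ℝ) (x : 𝒳) : ℝ :=
  ∫ ω, (f x (R ω) (Z ω) - fbar μ R Z f x) ^ 2 ∂μ

/-- The pointwise covariance of two estimators trained on the same dataset `Z` with seeds
`R` and `R'`. -/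
noncomputable def covf {Ω 𝒳 ℛ 𝒵 : Type*} [MeasurableSpace Ω] (μ : Measure Ω)
    (R R' : Ω → ℛ) (Z : Ω → 𝒵) (f : 𝒳 → ℛ → 𝒵 → ℝ) (x : 𝒳) : ℝ :=
  ∫ ω, (f x (R ω) (Z ω) - fbar μ R Z f x) * (f x (R' ω) (Z ω) - fbar μ R' Z f x) ∂μ

/-- The average bias `Bias̄(x) = (1/M) Σ_m (f̄_m(x) − f*(x))`. -/
noncomputable def biasBar {Ω 𝒳 ℛ 𝒵 : Type*} [MeasurableSpace Ω] (μ : Measure Ω) {M : ℕ}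
    (Rs : Fin M → Ω → ℛ) (Z : Ω → 𝒵) (f : 𝒳 → ℛ → 𝒵 → ℝ) (fstar : 𝒳 → ℝ) (x : 𝒳) : ℝ :=
  (1 / (M : ℝ)) * ∑ m : Fin M, (fbar μ (Rs m) Z f x - fstar x)

/-- The average variance `Var̄(x) = (1/M) Σ_m Var(f_m|x)`. -/
noncomputable def varBar {Ω 𝒳 ℛ 𝒵 : Type*} [MeasurableSpace Ω] (μ : Measure Ω) {M : ℕ}
    (Rs : Fin M → Ω → ℛ) (Z : Ω → 𝒵) (f : 𝒳 → ℛ → 𝒵 → ℝ) (x : 𝒳) : ℝ :=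
  (1 / (M : ℝ)) * ∑ m : Fin M, varf μ (Rs m) Z f x

/-- The average covariance `Cov̄(x) = (1/(M(M−1))) Σ_m Σ_{m'≠m} Cov(f_m, f_{m'}|x)`. -/
noncomputable def covBar {Ω 𝒳 ℛ 𝒵 : Type*} [MeasurableSpace Ω] (μ : Measure Ω) {M : ℕ}
    (Rs : Fin M → Ω → ℛ) (Z : Ω → 𝒵) (f : 𝒳 → ℛ → 𝒵 → ℝ) (x : 𝒳) : ℝ :=
  (1 / ((M : ℝ) * ((M : ℝ) - 1))) *
    ∑ m : Fin M, ∑ m' ∈ Finset.univ \ {m}, covf μ (Rs m) (Rs m') Z f x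

/-- The ensemble estimator `f_ens(x) = (1/M) Σ_m f(x; R⁽ᵐ⁾, Z)`. -/
noncomputable def fens {Ω 𝒳 ℛ 𝒵 : Type*} {M : ℕ}
    (Rs : Fin M → Ω → ℛ) (Z : Ω → 𝒵) (f : 𝒳 → ℛ → 𝒵 → ℝ) (x : 𝒳) (ω : Ω) : ℝ :=
  (1 / (M : ℝ)) * ∑ m : Fin M, f x (Rs m ω) (Z ω)

/-!
Split `Y₀ - f_ens(X₀) = (Y₀ - f*(X₀)) + (f*(X₀) - f_ens(X₀))`. Since the seeds and the dataset
are independent of `(X₀, Y₀)`, Fubini lets us freeze them; `f*(X₀) - f_ens(X₀)` is then a function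
of `X₀`, hence orthogonal to the residual `Y₀ - E[Y₀ | X₀]`, and the cross term vanishes. In the
remaining square we freeze `X₀ = x` instead: the mean squared deviation of `f_ens(x)` from `f*(x)`
is the squared bias plus `Var(f_ens(x)) = M⁻² Σ_{m,m'} Cov(f_m, f_{m'} | x)`, whose diagonal
gives the variances and whose off-diagonal part gives the covariances.
-/

section General

variable {Ω : Type*} {mΩ : MeasurableSpace Ω} {μ : Measure Ω}

lemma integral_mul_sub_condExp_eq_zero {m : MeasurableSpace Ω} (hm : m ≤ mΩ)
    [SigmaFinite (μ.trim hm)] {g Y : Ω → ℝ} (hg : StronglyMeasurable[m] g) (hY : Integrable Y μ) :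
    ∫ ω, g ω * (Y ω - μ[Y | m] ω) ∂μ = 0 := by
  by_cases hint : Integrable (g * (Y - μ[Y | m])) μ
  · have hresidual : μ[Y - μ[Y | m] | m] =ᵐ[μ] 0 := by
      filter_upwards [condExp_sub hY integrable_condExp m] with ω hω
      rw [hω, Pi.sub_apply,
        condExp_of_stronglyMeasurable hm stronglyMeasurable_condExp integrable_condExp, sub_self,
        Pi.zero_apply]
    have hpull := condExp_mul_of_stronglyMeasurable_left hg hint (hY.sub integrable_condExp)
    calc ∫ ω, g ω * (Y ω - μ[Y | m] ω) ∂μ = ∫ ω, μ[g * (Y - μ[Y | m]) | m] ω ∂μ :=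
          (integral_condExp hm).symm
      _ = ∫ _, (0 : ℝ) ∂μ := integral_congr_ae <| by
          filter_upwards [hpull, hresidual] with ω h₁ h₂
          simp [h₁, h₂]
      _ = 0 := integral_zero _ _
  · exact integral_undef hint

lemma ProbabilityTheory.IndepFun.integral_comp_eq_integral_integral [IsFiniteMeasure μ]
    {α β : Type*} [MeasurableSpace α] [MeasurableSpace β] {X : Ω → α} {W : Ω → β}
    (hXW : IndepFun X W μ) (hX : Measurable X) (hW : Measurable W) {Φ : α → β → ℝ}
    (hΦ : Measurable (Function.uncurry Φ)) (hint : Integrable (fun ω => Φ (X ω) (W ω)) μ) :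
    ∫ ω, Φ (X ω) (W ω) ∂μ = ∫ ω, ∫ ω', Φ (X ω) (W ω') ∂μ ∂μ := by
  have hlaw : μ.map (fun ω => (X ω, W ω)) = (μ.map X).prod (μ.map W) :=
    (indepFun_iff_map_prod_eq_prod_map_map hX.aemeasurable hW.aemeasurable).mp hXW
  have hXW_meas : AEMeasurable (fun ω => (X ω, W ω)) μ := (hX.prodMk hW).aemeasurable
  have hint_prod : Integrable (Function.uncurry Φ) ((μ.map X).prod (μ.map W)) := by
    rw [← hlaw]
    exact (integrable_map_measure hΦ.aestronglyMeasurable hXW_meas).mpr hint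
  calc ∫ ω, Φ (X ω) (W ω) ∂μ = ∫ p, Function.uncurry Φ p ∂((μ.map X).prod (μ.map W)) := by
        rw [← hlaw, integral_map hXW_meas hΦ.aestronglyMeasurable]
        rfl
    _ = ∫ x, ∫ w, Φ x w ∂(μ.map W) ∂(μ.map X) := integral_prod _ hint_prod
    _ = ∫ ω, ∫ ω', Φ (X ω) (W ω') ∂μ ∂μ := by
        have hinner : StronglyMeasurable (fun x => ∫ w, Φ x w ∂(μ.map W)) :=
          hΦ.stronglyMeasurable.integral_prod_right'
        rw [integral_map hX.aemeasurable hinner.aestronglyMeasurable]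
        refine integral_congr_ae (Filter.Eventually.of_forall fun ω => ?_)
        exact integral_map hW.aemeasurable
          (hΦ.comp measurable_prodMk_left).aestronglyMeasurable

lemma integral_sub_regression_mul_eq_zero_of_indepFun [IsFiniteMeasure μ]
    {α β : Type*} [MeasurableSpace α] [MeasurableSpace β] {X : Ω → α} {Y : Ω → ℝ} {W : Ω → β}
    (hX : Measurable X) (hY : Measurable Y) (hW : Measurable W)
    (hWXY : IndepFun W (fun ω => (X ω, Y ω)) μ) (hYint : Integrable Y μ)
    {fstar : α → ℝ} (hfstar : Measurable fstar)
    (hreg : (fun ω => fstar (X ω)) =ᵐ[μ] μ[Y | MeasurableSpace.comap X inferInstance])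
    {h : α → β → ℝ} (hh : Measurable (Function.uncurry h))
    (hint : Integrable (fun ω => (Y ω - fstar (X ω)) * h (X ω) (W ω)) μ) :
    ∫ ω, (Y ω - fstar (X ω)) * h (X ω) (W ω) ∂μ = 0 := by
  refine (hWXY.integral_comp_eq_integral_integral hW (hX.prodMk hY)
    (Φ := fun w t => (t.2 - fstar t.1) * h t.1 w) (by fun_prop) hint).trans ?_
  refine integral_eq_zero_of_ae (Filter.Eventually.of_forall fun ω => ?_)
  have hm := hX.comap_le
  have : IsFiniteMeasure (μ.trim hm) := isFiniteMeasure_trim hm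
  calc ∫ ω', (Y ω' - fstar (X ω')) * h (X ω') (W ω) ∂μ
      = ∫ ω', h (X ω') (W ω) * (Y ω' - μ[Y | MeasurableSpace.comap X inferInstance] ω') ∂μ :=
        integral_congr_ae <| by
          filter_upwards [hreg] with ω' hω'
          rw [← hω', mul_comm]
    _ = 0 := integral_mul_sub_condExp_eq_zero hm
        ((hh.comp (measurable_id.prodMk measurable_const)).comp
          (comap_measurable X)).stronglyMeasurable hYint

lemma integral_sub_sq_eq_add_of_integral_mul_eq_zero {Y e g : Ω → ℝ} (hY : MemLp Y 2 μ)
    (he : MemLp e 2 μ) (hg : MemLp g 2 μ)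
    (horth : ∫ ω, (Y ω - e ω) * (e ω - g ω) ∂μ = 0) :
    ∫ ω, (Y ω - g ω) ^ 2 ∂μ = ∫ ω, (e ω - g ω) ^ 2 ∂μ + ∫ ω, (e ω - Y ω) ^ 2 ∂μ := by
  have hbias : Integrable (fun ω => (e ω - g ω) ^ 2) μ := (he.sub hg).integrable_sq
  have hnoise : Integrable (fun ω => (e ω - Y ω) ^ 2) μ := (he.sub hY).integrable_sq
  have hcross : Integrable (fun ω => 2 * ((Y ω - e ω) * (e ω - g ω))) μ :=
    ((hY.sub he).integrable_mul (he.sub hg)).const_mul 2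
  calc ∫ ω, (Y ω - g ω) ^ 2 ∂μ
        = ∫ ω, (e ω - g ω) ^ 2 + (2 * ((Y ω - e ω) * (e ω - g ω)) + (e ω - Y ω) ^ 2) ∂μ :=
        integral_congr_ae (Filter.Eventually.of_forall fun ω => by ring)
    _ = ∫ ω, (e ω - g ω) ^ 2 ∂μ + ∫ ω, (e ω - Y ω) ^ 2 ∂μ := by
        rw [integral_add hbias (hcross.fun_add hnoise), integral_add hcross hnoise,
          integral_const_mul, horth, mul_zero, zero_add]

lemma integral_sq_eq_sq_integral_add_variance [IsProbabilityMeasure μ] {X : Ω → ℝ}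
    (hX : MemLp X 2 μ) : ∫ ω, X ω ^ 2 ∂μ = (∫ ω, X ω ∂μ) ^ 2 + Var[X; μ] := by
  rw [variance_eq_sub hX]
  simp only [Pi.pow_apply]
  ring

end General

section Ensemble

variable {Ω 𝒳 ℛ 𝒵 : Type*} [MeasurableSpace Ω] {μ : Measure Ω} {M : ℕ} {Rs : Fin M → Ω → ℛ}
  {Z : Ω → 𝒵} {f : 𝒳 → ℛ → 𝒵 → ℝ}

lemma varf_eq_covf (R : Ω → ℛ) (x : 𝒳) : varf μ R Z f x = covf μ R R Z f x :=
  integral_congr_ae (Filter.Eventually.of_forall fun _ => sq _)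

lemma sum_sum_covf_eq_add_offDiag (x : 𝒳) :
    ∑ m, ∑ m', covf μ (Rs m) (Rs m') Z f x
      = ∑ m, varf μ (Rs m) Z f x + ∑ m, ∑ m' ∈ univ \ {m}, covf μ (Rs m) (Rs m') Z f x := by
  rw [← sum_add_distrib]
  refine sum_congr rfl fun m _ => ?_
  rw [← erase_eq, ← add_sum_erase _ _ (mem_univ m), varf_eq_covf]

lemma integral_fens (x : 𝒳) (hfL1 : ∀ m, Integrable (fun ω => f x (Rs m ω) (Z ω)) μ) :
    ∫ ω, fens Rs Z f x ω ∂μ = (1 / (M : ℝ)) * ∑ m, fbar μ (Rs m) Z f x := by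
  change ∫ ω, (1 / (M : ℝ)) * ∑ m, f x (Rs m ω) (Z ω) ∂μ = _
  rw [integral_const_mul, integral_finsetSum _ fun m _ => hfL1 m]
  rfl

lemma variance_fens [IsProbabilityMeasure μ] (x : 𝒳)
    (hfL2 : ∀ m, MemLp (fun ω => f x (Rs m ω) (Z ω)) 2 μ) :
    Var[fens Rs Z f x; μ] = (1 / (M : ℝ)) ^ 2 * ∑ m, ∑ m', covf μ (Rs m) (Rs m') Z f x := by
  change Var[fun ω => (1 / (M : ℝ)) * ∑ m, f x (Rs m ω) (Z ω); μ] = _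
  rw [variance_const_mul, variance_fun_sum hfL2]
  rfl

theorem integral_sub_fens_sq_eq_bias_var_cov [IsProbabilityMeasure μ] (hM : 2 ≤ M)
    (fstar : 𝒳 → ℝ) (x : 𝒳) (hfL2 : ∀ m, MemLp (fun ω => f x (Rs m ω) (Z ω)) 2 μ) :
    ∫ ω, (fstar x - fens Rs Z f x ω) ^ 2 ∂μ
      = biasBar μ Rs Z f fstar x ^ 2 + (1 / (M : ℝ)) * varBar μ Rs Z f x
        + (1 - 1 / (M : ℝ)) * covBar μ Rs Z f x := by
  have hM₀ : (M : ℝ) ≠ 0 := by positivity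
  have hM₁ : (M : ℝ) - 1 ≠ 0 := by
    have : (2 : ℝ) ≤ M := by exact_mod_cast hM
    linarith
  have hfensL2 : MemLp (fens Rs Z f x) 2 μ := (memLp_finsetSum _ fun m _ => hfL2 m).const_mul _
  have hfensL1 : Integrable (fens Rs Z f x) μ := hfensL2.integrable one_le_two
  have hdevL2 : MemLp (fun ω => fstar x - fens Rs Z f x ω) 2 μ :=
    (memLp_const (fstar x)).sub hfensL2
  rw [integral_sq_eq_sq_integral_add_variance hdevL2,
    integral_sub (integrable_const _) hfensL1, integral_const,
    integral_fens x fun m => (hfL2 m).integrable one_le_two,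
    variance_const_sub hfensL2.aestronglyMeasurable, variance_fens x hfL2,
    sum_sum_covf_eq_add_offDiag]
  simp only [probReal_univ, one_smul, biasBar, varBar, covBar, sum_sub_distrib, sum_const,
    card_univ, Fintype.card_fin, nsmul_eq_mul]
  field_simp
  ring

end Ensemble

theorem ensemble_generalization_error_decomposition_general
    {Ω 𝒳 ℛ 𝒵 : Type*} [MeasurableSpace Ω] [MeasurableSpace 𝒳]
    [MeasurableSpace ℛ] [MeasurableSpace 𝒵]
    (μ : Measure Ω) [IsProbabilityMeasure μ]
    (X₀ : Ω → 𝒳) (Y₀ : Ω → ℝ) (Z : Ω → 𝒵)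
    (M : ℕ) (hM : 2 ≤ M) (Rs : Fin M → Ω → ℛ)
    (hX₀ : Measurable X₀) (hY₀ : Measurable Y₀) (hZ : Measurable Z)
    (hRs : ∀ m, Measurable (Rs m))
    (hY₀L2 : MemLp Y₀ 2 μ)
    (f : 𝒳 → ℛ → 𝒵 → ℝ) (hf : Measurable fun p : 𝒳 × ℛ × 𝒵 => f p.1 p.2.1 p.2.2)
    (hfL2 : ∀ x m, MemLp (fun ω => f x (Rs m ω) (Z ω)) 2 μ)
    (hfX₀L2 : ∀ m, MemLp (fun ω => f (X₀ ω) (Rs m ω) (Z ω)) 2 μ)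
    (hindep : IndepFun (fun ω => ((fun m => Rs m ω), Z ω)) (fun ω => (X₀ ω, Y₀ ω)) μ)
    (fstar : 𝒳 → ℝ) (hfstar : Measurable fstar)
    (hreg : (fun ω => fstar (X₀ ω)) =ᵐ[μ] μ[Y₀ | MeasurableSpace.comap X₀ inferInstance])
    (hfstarL2 : MemLp (fun ω => fstar (X₀ ω)) 2 μ) :
    ∫ ω, (Y₀ ω - fens Rs Z f (X₀ ω) ω) ^ 2 ∂μ
      = ∫ ω, (biasBar μ Rs Z f fstar (X₀ ω) ^ 2
            + (1 / (M : ℝ)) * varBar μ Rs Z f (X₀ ω)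
            + (1 - 1 / (M : ℝ)) * covBar μ Rs Z f (X₀ ω)) ∂μ
        + ∫ ω, (fstar (X₀ ω) - Y₀ ω) ^ 2 ∂μ := by
  set W : Ω → (Fin M → ℛ) × 𝒵 := fun ω => (fun m => Rs m ω, Z ω)
  have hW : Measurable W := (measurable_pi_lambda _ hRs).prodMk hZ
  set Δ : 𝒳 → (Fin M → ℛ) × 𝒵 → ℝ := fun x w => fstar x - (1 / (M : ℝ)) * ∑ m, f x (w.1 m) w.2
  have hfm (m : Fin M) : Measurable fun p : 𝒳 × ((Fin M → ℛ) × 𝒵) => f p.1 (p.2.1 m) p.2.2 :=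
    hf.comp (f := fun p : 𝒳 × ((Fin M → ℛ) × 𝒵) => (p.1, p.2.1 m, p.2.2)) (by fun_prop)
  have hΔ : Measurable (Function.uncurry Δ) := by fun_prop
  have hfensL2 : MemLp (fun ω => fens Rs Z f (X₀ ω) ω) 2 μ :=
    (memLp_finsetSum _ fun m _ => hfX₀L2 m).const_mul _
  have horth : ∫ ω, (Y₀ ω - fstar (X₀ ω)) * (fstar (X₀ ω) - fens Rs Z f (X₀ ω) ω) ∂μ = 0 :=
    integral_sub_regression_mul_eq_zero_of_indepFun hX₀ hY₀ hW hindep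
      (hY₀L2.integrable one_le_two) hfstar hreg hΔ
      ((hY₀L2.sub hfstarL2).integrable_mul (hfstarL2.sub hfensL2))
  have hquad : ∫ ω, (fstar (X₀ ω) - fens Rs Z f (X₀ ω) ω) ^ 2 ∂μ
      = ∫ ω, (biasBar μ Rs Z f fstar (X₀ ω) ^ 2 + (1 / (M : ℝ)) * varBar μ Rs Z f (X₀ ω)
          + (1 - 1 / (M : ℝ)) * covBar μ Rs Z f (X₀ ω)) ∂μ := by
    have hX₀W : IndepFun X₀ W μ := (hindep.comp measurable_id measurable_fst).symm
    refine (hX₀W.integral_comp_eq_integral_integral hX₀ hW (Φ := fun x w => Δ x w ^ 2)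
      (by fun_prop) (hfstarL2.sub hfensL2).integrable_sq).trans ?_
    exact integral_congr_ae (Filter.Eventually.of_forall fun ω =>
      integral_sub_fens_sq_eq_bias_var_cov hM fstar (X₀ ω) (hfL2 (X₀ ω)))
  rw [← hquad]
  exact integral_sub_sq_eq_add_of_integral_mul_eq_zero hY₀L2 hfstarL2 hfensL2 horth

/-- Bias–variance–covariance decomposition of the generalization error of an ensemble trained
on a single dataset with multiple random seeds:
`GE(f_ens) = E[(Bias̄(X₀))² + (1/M) Var̄(X₀) + (1 − 1/M) Cov̄(X₀)] + σ²`. -/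
theorem ensemble_generalization_error_decomposition
    {Ω 𝒳 ℛ 𝒵 : Type*} [MeasurableSpace Ω] [MeasurableSpace 𝒳]
    [MeasurableSpace ℛ] [MeasurableSpace 𝒵]
    (μ : Measure Ω) [IsProbabilityMeasure μ]
    (X₀ : Ω → 𝒳) (Y₀ : Ω → ℝ) (Z : Ω → 𝒵)
    (M : ℕ) (hM : 2 ≤ M) (Rs : Fin M → Ω → ℛ)
    (hX₀ : Measurable X₀) (hY₀ : Measurable Y₀) (hZ : Measurable Z)
    (hRs : ∀ m, Measurable (Rs m))
    (hY₀L2 : MemLp Y₀ 2 μ)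
    (f : 𝒳 → ℛ → 𝒵 → ℝ) (hf : Measurable fun p : 𝒳 × ℛ × 𝒵 => f p.1 p.2.1 p.2.2)
    (hfL2 : ∀ x m, MemLp (fun ω => f x (Rs m ω) (Z ω)) 2 μ)
    (hfX₀L2 : ∀ m, MemLp (fun ω => f (X₀ ω) (Rs m ω) (Z ω)) 2 μ)
    (hindep : IndepFun (fun ω => ((fun m => Rs m ω), Z ω)) (fun ω => (X₀ ω, Y₀ ω)) μ)
    (fstar : 𝒳 → ℝ) (hfstar : Measurable fstar)
    (hreg : (fun ω => fstar (X₀ ω)) =ᵐ[μ] μ[Y₀ | MeasurableSpace.comap X₀ inferInstance])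
    (hfbarL2 : ∀ m, MemLp (fun ω => fbar μ (Rs m) Z f (X₀ ω)) 2 μ)
    (hfstarL2 : MemLp (fun ω => fstar (X₀ ω)) 2 μ)
    (hvarInt : Integrable (fun ω => varBar μ Rs Z f (X₀ ω)) μ)
    (hcovInt : Integrable (fun ω => covBar μ Rs Z f (X₀ ω)) μ) :
    ∫ ω, (Y₀ ω - fens Rs Z f (X₀ ω) ω) ^ 2 ∂μ
      = ∫ ω, (biasBar μ Rs Z f fstar (X₀ ω) ^ 2
            + (1 / (M : ℝ)) * varBar μ Rs Z f (X₀ ω)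
            + (1 - 1 / (M : ℝ)) * covBar μ Rs Z f (X₀ ω)) ∂μ
        + ∫ ω, (fstar (X₀ ω) - Y₀ ω) ^ 2 ∂μ :=
  ensemble_generalization_error_decomposition_general μ X₀ Y₀ Z M hM Rs hX₀ hY₀ hZ hRs hY₀L2 f hf
    hfL2 hfX₀L2 hindep fstar hfstar hreg hfstarL2
end

section
/- For an ensemble of M estimators built from the same function f, the same dataset Z, and random seeds R⁽¹⁾, …, R⁽ᴹ⁾, the average pairwise covariance never exceeds the average variance: Cov̄(x) ≤ Var̄(x) for every x ∈ 𝒳. Consequently, if each pair (R⁽ᵐ⁾, Z) has the same joint distribution as (R, Z) (so that the M estimators are identical and differ only in the random numbers used), then GE(f_ens) ≤ GE(f). -/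
open MeasureTheory ProbabilityTheory Finset

/-!
Integrating `a b ≤ (a² + b²) / 2` against the centred estimators gives
`Cov(f_m, f_{m'}|x) ≤ (Var(f_m|x) + Var(f_{m'}|x)) / 2`, and averaging over the `M (M - 1)` ordered
pairs gives `Cov̄(x) ≤ Var̄(x)`.

For the ensemble, `Y₀ - f_ens(X₀)` is the average of the errors `Y₀ - f_m(X₀)`, so by convexity of
the square `GE(f_ens)` is at most the average of the `E[(Y₀ - f_m(X₀))²]`. Since the test pair is
independent of both `(R⁽ᵐ⁾, Z)` and `(R, Z)`, and these have the same law, the joint law of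
`(X₀, Y₀, R⁽ᵐ⁾, Z)` is that of `(X₀, Y₀, R, Z)`, so each of these errors equals `GE(f)`.
-/

section Estimates

variable {Ω : Type*} [MeasurableSpace Ω] {μ : Measure Ω}

lemma integral_mul_le_half_integral_sq_add {a b : Ω → ℝ} (ha : MemLp a 2 μ) (hb : MemLp b 2 μ) :
    ∫ ω, a ω * b ω ∂μ ≤ ((∫ ω, a ω ^ 2 ∂μ) + ∫ ω, b ω ^ 2 ∂μ) / 2 := by
  rw [← integral_add ha.integrable_sq hb.integrable_sq, ← integral_div]
  refine integral_mono (ha.integrable_mul hb) ((ha.integrable_sq.add hb.integrable_sq).div_const 2)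
    fun ω => ?_
  linarith [two_mul_le_add_sq (a ω) (b ω)]

lemma integral_sq_sum_div_card_le {ι : Type*} [Fintype ι] {h : ι → Ω → ℝ}
    (hh : ∀ i, MemLp (h i) 2 μ) :
    ∫ ω, ((∑ i, h i ω) / Fintype.card ι) ^ 2 ∂μ ≤ (∑ i, ∫ ω, h i ω ^ 2 ∂μ) / Fintype.card ι := by
  rw [← integral_finsetSum _ fun i _ => (hh i).integrable_sq, ← integral_div]
  refine integral_mono_of_nonneg (.of_forall fun ω => sq_nonneg _)
    ((integrable_finsetSum _ fun i _ => (hh i).integrable_sq).div_const _) (.of_forall fun ω => ?_)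
  exact sum_div_card_sq_le_sum_sq_div_card

end Estimates

lemma sum_sum_sdiff_singleton_le {ι : Type*} [Fintype ι] [DecidableEq ι] {c : ι → ι → ℝ}
    {v : ι → ℝ} (hc : ∀ i j, c i j ≤ (v i + v j) / 2) :
    ∑ i, ∑ j ∈ univ \ {i}, c i j ≤ ((Fintype.card ι : ℝ) - 1) * ∑ i, v i := by
  have hinner : ∀ i, ∑ j ∈ univ \ {i}, (v i + v j) / 2
      = (((Fintype.card ι : ℝ) - 1) * v i + ((∑ j, v j) - v i)) / 2 := by
    intro i
    rw [← sum_div, sum_add_distrib, sum_const, sum_sdiff_eq_sub (subset_univ _), sum_singleton,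
      card_sdiff_of_subset (subset_univ _), card_univ, card_singleton, nsmul_eq_mul,
      Nat.cast_sub (Fintype.card_pos_iff.2 ⟨i⟩), Nat.cast_one]
  calc ∑ i, ∑ j ∈ univ \ {i}, c i j ≤ ∑ i, ∑ j ∈ univ \ {i}, (v i + v j) / 2 :=
        sum_le_sum fun i _ => sum_le_sum fun j _ => hc i j
    _ = ((Fintype.card ι : ℝ) - 1) * ∑ i, v i := by
        rw [sum_congr rfl fun i _ => hinner i, ← sum_div, sum_add_distrib, ← mul_sum,
          sum_sub_distrib, sum_const, card_univ, nsmul_eq_mul]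
        ring

lemma ProbabilityTheory.IdentDistrib.integral_comp_prodMk_eq_of_indepFun {Ω α β : Type*}
    [MeasurableSpace Ω] [MeasurableSpace α] [MeasurableSpace β] {μ : Measure Ω} [IsFiniteMeasure μ]
    {W : Ω → α} {V V' : Ω → β} (hVV' : IdentDistrib V V' μ μ) (hW : AEMeasurable W μ)
    (hWV : W ⟂ᵢ[μ] V) (hWV' : W ⟂ᵢ[μ] V') {φ : α × β → ℝ} (hφ : Measurable φ) :
    ∫ ω, φ (W ω, V ω) ∂μ = ∫ ω, φ (W ω, V' ω) ∂μ :=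
  (((IdentDistrib.refl hW).prodMk hVV' hWV hWV').comp hφ).integral_eq

section Ensemble

variable {Ω 𝒳 ℛ 𝒵 : Type*} [MeasurableSpace Ω] {μ : Measure Ω} [IsFiniteMeasure μ] {Z : Ω → 𝒵}
  {f : 𝒳 → ℛ → 𝒵 → ℝ} {x : 𝒳}

lemma covf_le_varf_add_varf_div_two {R R' : Ω → ℛ} (hR : MemLp (fun ω => f x (R ω) (Z ω)) 2 μ)
    (hR' : MemLp (fun ω => f x (R' ω) (Z ω)) 2 μ) :
    covf μ R R' Z f x ≤ (varf μ R Z f x + varf μ R' Z f x) / 2 :=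
  integral_mul_le_half_integral_sq_add (hR.sub (memLp_const _)) (hR'.sub (memLp_const _))

lemma covBar_le_varBar {M : ℕ} (hM : 2 ≤ M) {Rs : Fin M → Ω → ℛ}
    (hRs : ∀ m, MemLp (fun ω => f x (Rs m ω) (Z ω)) 2 μ) :
    covBar μ Rs Z f x ≤ varBar μ Rs Z f x := by
  have hsum := sum_sum_sdiff_singleton_le (c := fun m m' => covf μ (Rs m) (Rs m') Z f x)
    (v := fun m => varf μ (Rs m) Z f x) fun m m' => covf_le_varf_add_varf_div_two (hRs m) (hRs m')
  rw [Fintype.card_fin] at hsum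
  have hM1 : (0 : ℝ) < M - 1 := by
    have : (2 : ℝ) ≤ M := by exact_mod_cast hM
    linarith
  unfold covBar varBar
  calc 1 / ((M : ℝ) * (M - 1)) * ∑ m, ∑ m' ∈ univ \ {m}, covf μ (Rs m) (Rs m') Z f x
      ≤ 1 / ((M : ℝ) * (M - 1)) * ((M - 1) * ∑ m, varf μ (Rs m) Z f x) := by gcongr
    _ = 1 / (M : ℝ) * ∑ m, varf μ (Rs m) Z f x := by field_simp

end Ensemble

theorem covBar_le_varBar_and_ensemble_GE_le_GE_general
    {Ω 𝒳 ℛ 𝒵 : Type*} [MeasurableSpace Ω] [MeasurableSpace 𝒳]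
    [MeasurableSpace ℛ] [MeasurableSpace 𝒵]
    (μ : Measure Ω) [IsProbabilityMeasure μ]
    (X₀ : Ω → 𝒳) (Y₀ : Ω → ℝ) (Z : Ω → 𝒵) (R : Ω → ℛ)
    (M : ℕ) (hM : 2 ≤ M) (Rs : Fin M → Ω → ℛ)
    (hX₀ : Measurable X₀) (hY₀ : Measurable Y₀)
    (hY₀L2 : MemLp Y₀ 2 μ)
    (f : 𝒳 → ℛ → 𝒵 → ℝ) (hf : Measurable fun p : 𝒳 × ℛ × 𝒵 => f p.1 p.2.1 p.2.2)
    (hfmL2 : ∀ x m, MemLp (fun ω => f x (Rs m ω) (Z ω)) 2 μ)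
    (hfmX₀L2 : ∀ m, MemLp (fun ω => f (X₀ ω) (Rs m ω) (Z ω)) 2 μ)
    (hindep : IndepFun (fun ω => (R ω, Z ω)) (fun ω => (X₀ ω, Y₀ ω)) μ)
    (hindepEns : IndepFun (fun ω => ((fun m => Rs m ω), Z ω)) (fun ω => (X₀ ω, Y₀ ω)) μ) :
    (∀ x : 𝒳, covBar μ Rs Z f x ≤ varBar μ Rs Z f x)
      ∧ ((∀ m, IdentDistrib (fun ω => (Rs m ω, Z ω)) (fun ω => (R ω, Z ω)) μ μ) →
          ∫ ω, (Y₀ ω - fens Rs Z f (X₀ ω) ω) ^ 2 ∂μ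
            ≤ ∫ ω, (Y₀ ω - f (X₀ ω) (R ω) (Z ω)) ^ 2 ∂μ) := by
  refine ⟨fun x => covBar_le_varBar hM (hfmL2 x), fun hid => ?_⟩
  have hindepm (m : Fin M) : IndepFun (fun ω => (X₀ ω, Y₀ ω)) (fun ω => (Rs m ω, Z ω)) μ :=
    (hindepEns.comp (((measurable_pi_apply m).comp measurable_fst).prodMk measurable_snd)
      measurable_id).symm
  have hGE (m : Fin M) : ∫ ω, (Y₀ ω - f (X₀ ω) (Rs m ω) (Z ω)) ^ 2 ∂μ
      = ∫ ω, (Y₀ ω - f (X₀ ω) (R ω) (Z ω)) ^ 2 ∂μ :=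
    (hid m).integral_comp_prodMk_eq_of_indepFun (hX₀.prodMk hY₀).aemeasurable (hindepm m)
      hindep.symm (φ := fun p => (p.1.2 - f p.1.1 p.2.1 p.2.2) ^ 2)
      ((measurable_fst.snd.sub (hf.comp (measurable_fst.fst.prodMk measurable_snd))).pow_const 2)
  have hM0 : (M : ℝ) ≠ 0 := Nat.cast_ne_zero.2 (by omega)
  calc ∫ ω, (Y₀ ω - fens Rs Z f (X₀ ω) ω) ^ 2 ∂μ
      = ∫ ω, ((∑ m, (Y₀ ω - f (X₀ ω) (Rs m ω) (Z ω))) / Fintype.card (Fin M)) ^ 2 ∂μ := by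
        congr with ω
        rw [fens, sum_sub_distrib, sum_const, card_univ, nsmul_eq_mul, Fintype.card_fin]
        field_simp
    _ ≤ (∑ m, ∫ ω, (Y₀ ω - f (X₀ ω) (Rs m ω) (Z ω)) ^ 2 ∂μ) / Fintype.card (Fin M) :=
        integral_sq_sum_div_card_le fun m => hY₀L2.sub (hfmX₀L2 m)
    _ = ∫ ω, (Y₀ ω - f (X₀ ω) (R ω) (Z ω)) ^ 2 ∂μ := by
        rw [sum_congr rfl fun m _ => hGE m, sum_const, card_univ, nsmul_eq_mul, Fintype.card_fin]
        field_simp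

/-- For an ensemble built from the same `f`, the same dataset `Z`, and seeds `R⁽¹⁾, …, R⁽ᴹ⁾`,
the average pairwise covariance never exceeds the average variance: `Cov̄(x) ≤ Var̄(x)` for
every `x`.  Consequently, if each pair `(R⁽ᵐ⁾, Z)` has the same joint distribution as
`(R, Z)` (the `M` estimators are identical and differ only in the random numbers used),
then `GE(f_ens) ≤ GE(f)`. -/
theorem covBar_le_varBar_and_ensemble_GE_le_GE
    {Ω 𝒳 ℛ 𝒵 : Type*} [MeasurableSpace Ω] [MeasurableSpace 𝒳]
    [MeasurableSpace ℛ] [MeasurableSpace 𝒵]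
    (μ : Measure Ω) [IsProbabilityMeasure μ]
    (X₀ : Ω → 𝒳) (Y₀ : Ω → ℝ) (Z : Ω → 𝒵) (R : Ω → ℛ)
    (M : ℕ) (hM : 2 ≤ M) (Rs : Fin M → Ω → ℛ)
    (hX₀ : Measurable X₀) (hY₀ : Measurable Y₀) (hZ : Measurable Z) (hR : Measurable R)
    (hRs : ∀ m, Measurable (Rs m))
    (hY₀L2 : MemLp Y₀ 2 μ)
    (f : 𝒳 → ℛ → 𝒵 → ℝ) (hf : Measurable fun p : 𝒳 × ℛ × 𝒵 => f p.1 p.2.1 p.2.2)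
    (hfL2 : ∀ x, MemLp (fun ω => f x (R ω) (Z ω)) 2 μ)
    (hfmL2 : ∀ x m, MemLp (fun ω => f x (Rs m ω) (Z ω)) 2 μ)
    (hfX₀L2 : MemLp (fun ω => f (X₀ ω) (R ω) (Z ω)) 2 μ)
    (hfmX₀L2 : ∀ m, MemLp (fun ω => f (X₀ ω) (Rs m ω) (Z ω)) 2 μ)
    (hindep : IndepFun (fun ω => (R ω, Z ω)) (fun ω => (X₀ ω, Y₀ ω)) μ)
    (hindepEns : IndepFun (fun ω => ((fun m => Rs m ω), Z ω)) (fun ω => (X₀ ω, Y₀ ω)) μ)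
    (hfbarL2 : MemLp (fun ω => fbar μ R Z f (X₀ ω)) 2 μ)
    (hfbarmL2 : ∀ m, MemLp (fun ω => fbar μ (Rs m) Z f (X₀ ω)) 2 μ)
    (hvarInt : Integrable (fun ω => varf μ R Z f (X₀ ω)) μ)
    (hvarBarInt : Integrable (fun ω => varBar μ Rs Z f (X₀ ω)) μ)
    (hcovBarInt : Integrable (fun ω => covBar μ Rs Z f (X₀ ω)) μ) :
    (∀ x : 𝒳, covBar μ Rs Z f x ≤ varBar μ Rs Z f x)
      ∧ ((∀ m, IdentDistrib (fun ω => (Rs m ω, Z ω)) (fun ω => (R ω, Z ω)) μ μ) →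
          ∫ ω, (Y₀ ω - fens Rs Z f (X₀ ω) ω) ^ 2 ∂μ
            ≤ ∫ ω, (Y₀ ω - f (X₀ ω) (R ω) (Z ω)) ^ 2 ∂μ) :=
  covBar_le_varBar_and_ensemble_GE_le_GE_general μ X₀ Y₀ Z R M hM Rs hX₀ hY₀ hY₀L2 f hf hfmL2
    hfmX₀L2 hindep hindepEns
end
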